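/- arXiv:0801.1353 — 5 statements merged into one kernel-verified Lean document; each statement's English description precedes it below -/
import Mathlib

section
/- Two orthonormal bases (ξᵢ) and (ζⱼ) of ℂ^d are mutually unbiased (i.e., |⟨ξᵢ, ζⱼ⟩|² = 1/d for all i,j) if and only if the maximal abelian subalgebras of M_d(ℂ) generated by the rank-one projections |ξᵢ⟩⟨ξᵢ| and |ζⱼ⟩⟨ζⱼ| respectively are quasi-orthogonal. -/
open Matrix

/-- Quasi-orthogonality of unital *-subalgebras of `M_d(ℂ)`. -/
def QuasiOrthogonal {d : ℕ} (A₁ A₂ : StarSubalgebra ℂ (Matrix (Fin d) (Fin d) ℂ)) : Prop :=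
  ∀ A ∈ A₁, ∀ B ∈ A₂, Matrix.trace A = 0 → Matrix.trace B = 0 →
    Matrix.trace (star A * B) = 0

/-- The rank-one projection `|ξ⟩⟨ξ|` as a matrix. -/
def rankOneProj {d : ℕ} (ξ : Fin d → ℂ) : Matrix (Fin d) (Fin d) ℂ :=
  Matrix.of fun a b => ξ a * (starRingEnd ℂ) (ξ b)

/-! For an orthonormal basis `ξ`, the projections `P i = |ξ i⟩⟨ξ i|` are orthogonal idempotents
summing to `1`, so the *-algebra they generate is their linear span, with
`tr (∑ a i • P i) = ∑ a i`.
Two unital *-subalgebras are quasi-orthogonal iff `tr (A⋆ B) = tr A⋆ tr B / d` on them: apply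
quasi-orthogonality to the traceless parts `A - (tr A / d) • 1`. For the two spans, bilinearity
reduces this identity to the generators, where `tr (P i Q j) = |⟨ξ i, ζ j⟩|²` and
`tr (P i) = tr (Q j) = 1`, i.e. to mutual unbiasedness. -/

section RankOneProj

variable {d : ℕ}

lemma rankOneProj_eq_vecMulVec (v : Fin d → ℂ) : rankOneProj v = vecMulVec v (star v) := rfl

lemma star_rankOneProj (v : Fin d → ℂ) : star (rankOneProj v) = rankOneProj v := by
  rw [rankOneProj_eq_vecMulVec, star_eq_conjTranspose, conjTranspose_vecMulVec, star_star]

lemma trace_rankOneProj (v : Fin d → ℂ) : trace (rankOneProj v) = star v ⬝ᵥ v := by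
  rw [rankOneProj_eq_vecMulVec, trace_vecMulVec, dotProduct_comm]

lemma rankOneProj_mul_rankOneProj (v w : Fin d → ℂ) :
    rankOneProj v * rankOneProj w = (star v ⬝ᵥ w) • vecMulVec v (star w) := by
  rw [rankOneProj_eq_vecMulVec, rankOneProj_eq_vecMulVec, vecMulVec_mul_vecMulVec,
    vecMulVec_smul]

lemma trace_rankOneProj_mul_rankOneProj (v w : Fin d → ℂ) :
    trace (rankOneProj v * rankOneProj w) = (‖star v ⬝ᵥ w‖ ^ 2 : ℝ) := by
  rw [rankOneProj_mul_rankOneProj, trace_smul, trace_vecMulVec, dotProduct_star, smul_eq_mul,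
    dotProduct_comm w, Complex.star_def]
  exact_mod_cast Complex.mul_conj' _

end RankOneProj

section Orthonormal

variable {d : ℕ} {ξ : Fin d → Fin d → ℂ}
  (hξ : ∀ i j, star (ξ i) ⬝ᵥ ξ j = if i = j then (1 : ℂ) else 0)
include hξ

lemma rankOneProj_mul_rankOneProj_of_orthonormal (i j : Fin d) :
    rankOneProj (ξ i) * rankOneProj (ξ j) = if i = j then rankOneProj (ξ i) else 0 := by
  rw [rankOneProj_mul_rankOneProj, hξ]
  split_ifs with h
  · rw [h, one_smul, rankOneProj_eq_vecMulVec]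
  · rw [zero_smul]

lemma sum_rankOneProj_of_orthonormal : ∑ i, rankOneProj (ξ i) = 1 := by
  set U : Matrix (Fin d) (Fin d) ℂ := (of ξ)ᵀ
  have hU : Uᴴ * U = 1 := by
    ext i j
    rw [one_apply, ← hξ i j]
    simp [U, mul_apply, dotProduct]
  rw [← mul_eq_one_comm.mp hU]
  ext a b
  simp [U, mul_apply, Matrix.sum_apply, rankOneProj]

lemma trace_sum_smul_rankOneProj_of_orthonormal (a : Fin d → ℂ) :
    trace (∑ i, a i • rankOneProj (ξ i)) = ∑ i, a i := by
  simp [trace_sum, trace_smul, trace_rankOneProj, hξ]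

lemma exists_eq_sum_smul_of_mem_adjoin_rankOneProj {A : Matrix (Fin d) (Fin d) ℂ}
    (hA : A ∈ StarAlgebra.adjoin ℂ (Set.range fun i => rankOneProj (ξ i))) :
    ∃ a : Fin d → ℂ, A = ∑ i, a i • rankOneProj (ξ i) := by
  induction hA using StarAlgebra.adjoin_induction with
  | mem x hx =>
    obtain ⟨i, rfl⟩ := hx
    exact ⟨Pi.single i 1, by simp [Pi.single_apply]⟩
  | algebraMap r =>
    exact ⟨fun _ => r, by
      rw [Algebra.algebraMap_eq_smul_one, ← sum_rankOneProj_of_orthonormal hξ,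
        Finset.smul_sum]⟩
  | add x y _ _ hx hy =>
    obtain ⟨a, rfl⟩ := hx
    obtain ⟨b, rfl⟩ := hy
    exact ⟨a + b, by simp [add_smul, Finset.sum_add_distrib]⟩
  | mul x y _ _ hx hy =>
    obtain ⟨a, rfl⟩ := hx
    obtain ⟨b, rfl⟩ := hy
    refine ⟨a * b, ?_⟩
    simp_rw [Finset.sum_mul, Finset.mul_sum, smul_mul_smul_comm,
      rankOneProj_mul_rankOneProj_of_orthonormal hξ, smul_ite, smul_zero]
    simp
  | star x _ hx =>
    obtain ⟨a, rfl⟩ := hx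
    exact ⟨star a, by simp [star_sum, star_smul, star_rankOneProj]⟩

end Orthonormal

lemma trace_sum_smul_mul_sum_smul {ι κ n : Type*} [Fintype ι] [Fintype κ] [Fintype n]
    (a : ι → ℂ) (b : κ → ℂ) (X : ι → Matrix n n ℂ) (Y : κ → Matrix n n ℂ) :
    trace ((∑ i, a i • X i) * (∑ j, b j • Y j)) =
      ∑ i, ∑ j, a i * b j * trace (X i * Y j) := by
  simp_rw [Finset.sum_mul, Finset.mul_sum, trace_sum, smul_mul_smul_comm, trace_smul,
    smul_eq_mul]

lemma trace_star_sub_smul_one_mul_sub_smul_one {n : Type*} [Fintype n] [DecidableEq n]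
    (A B : Matrix n n ℂ) (α β : ℂ) :
    trace (star (A - α • 1) * (B - β • 1)) =
      trace (star A * B) - star α * trace B - β * star (trace A) +
        star α * β * Fintype.card n := by
  simp only [star_sub, star_smul, star_one, sub_mul, mul_sub, smul_mul_assoc, mul_smul_comm,
    one_mul, mul_one, trace_sub, trace_smul, trace_one, smul_eq_mul,
    ← trace_conjTranspose, star_eq_conjTranspose]
  ring

lemma quasiOrthogonal_iff_trace_star_mul {d : ℕ}
    (A₁ A₂ : StarSubalgebra ℂ (Matrix (Fin d) (Fin d) ℂ)) :
    QuasiOrthogonal A₁ A₂ ↔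
      ∀ A ∈ A₁, ∀ B ∈ A₂, trace (star A * B) = star (trace A) * trace B / d := by
  rcases eq_or_ne d 0 with rfl | hd
  · simp [QuasiOrthogonal]
  have traceless_mem {S : StarSubalgebra ℂ (Matrix (Fin d) (Fin d) ℂ)} {A} (hA : A ∈ S) :
      A - (trace A / d) • 1 ∈ S ∧ trace (A - (trace A / d) • 1) = 0 := by
    refine ⟨sub_mem hA (SMulMemClass.smul_mem _ (one_mem _)), ?_⟩
    rw [trace_sub, trace_smul, trace_one, Fintype.card_fin, smul_eq_mul,
      div_mul_cancel₀ _ (Nat.cast_ne_zero.mpr hd), sub_self]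
  constructor
  · intro h A hA B hB
    obtain ⟨hA₀, htA₀⟩ := traceless_mem hA
    obtain ⟨hB₀, htB₀⟩ := traceless_mem hB
    have h₀ := h _ hA₀ _ hB₀ htA₀ htB₀
    rw [trace_star_sub_smul_one_mul_sub_smul_one, Fintype.card_fin, star_div₀, star_natCast]
      at h₀
    field_simp at h₀ ⊢
    linear_combination h₀
  · intro h A hA B hB htA htB
    rw [h A hA B hB, htA, htB, star_zero, zero_mul, zero_div]

lemma trace_mul_eq_of_unbiased {d : ℕ} {ξ ζ : Fin d → Fin d → ℂ}
    (hξ : ∀ i j, star (ξ i) ⬝ᵥ ξ j = if i = j then (1 : ℂ) else 0)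
    (hζ : ∀ i j, star (ζ i) ⬝ᵥ ζ j = if i = j then (1 : ℂ) else 0)
    (hξζ : ∀ i j, ‖star (ξ i) ⬝ᵥ ζ j‖ ^ 2 = 1 / (d : ℝ))
    {A B : Matrix (Fin d) (Fin d) ℂ}
    (hA : A ∈ StarAlgebra.adjoin ℂ (Set.range fun i => rankOneProj (ξ i)))
    (hB : B ∈ StarAlgebra.adjoin ℂ (Set.range fun j => rankOneProj (ζ j))) :
    trace (A * B) = trace A * trace B / d := by
  obtain ⟨a, rfl⟩ := exists_eq_sum_smul_of_mem_adjoin_rankOneProj hξ hA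
  obtain ⟨b, rfl⟩ := exists_eq_sum_smul_of_mem_adjoin_rankOneProj hζ hB
  rw [trace_sum_smul_mul_sum_smul (X := fun i => rankOneProj (ξ i))
      (Y := fun j => rankOneProj (ζ j)), trace_sum_smul_rankOneProj_of_orthonormal hξ,
    trace_sum_smul_rankOneProj_of_orthonormal hζ, Finset.sum_mul_sum, Finset.sum_div]
  simp only [trace_rankOneProj_mul_rankOneProj, hξζ, Finset.sum_div]
  push_cast
  simp only [mul_one_div]

theorem stmt2_general {d : ℕ} (ξ ζ : Fin d → Fin d → ℂ)
    (hξ : ∀ i j, star (ξ i) ⬝ᵥ ξ j = if i = j then (1 : ℂ) else 0)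
    (hζ : ∀ i j, star (ζ i) ⬝ᵥ ζ j = if i = j then (1 : ℂ) else 0) :
    (∀ i j, ‖star (ξ i) ⬝ᵥ ζ j‖ ^ 2 = 1 / (d : ℝ)) ↔
      QuasiOrthogonal
        (StarAlgebra.adjoin ℂ (Set.range fun i => rankOneProj (ξ i)))
        (StarAlgebra.adjoin ℂ (Set.range fun j => rankOneProj (ζ j))) := by
  rw [quasiOrthogonal_iff_trace_star_mul]
  constructor
  · intro hξζ A hA B hB
    rw [trace_mul_eq_of_unbiased hξ hζ hξζ (star_mem hA) hB, star_eq_conjTranspose,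
      trace_conjTranspose]
  · intro h i j
    have hij := h _ (StarAlgebra.subset_adjoin ℂ _ ⟨i, rfl⟩)
      _ (StarAlgebra.subset_adjoin ℂ _ ⟨j, rfl⟩)
    rw [star_rankOneProj, trace_rankOneProj_mul_rankOneProj, trace_rankOneProj,
      trace_rankOneProj, hξ, hζ] at hij
    simp only [if_pos, star_one, one_mul] at hij
    rw [← Complex.ofReal_inj, hij]
    norm_num

theorem stmt2 {d : ℕ} (hd : 0 < d) (ξ ζ : Fin d → Fin d → ℂ)
    (hξ : ∀ i j, star (ξ i) ⬝ᵥ ξ j = if i = j then (1 : ℂ) else 0)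
    (hζ : ∀ i j, star (ζ i) ⬝ᵥ ζ j = if i = j then (1 : ℂ) else 0) :
    (∀ i j, ‖star (ξ i) ⬝ᵥ ζ j‖ ^ 2 = 1 / (d : ℝ)) ↔
      QuasiOrthogonal
        (StarAlgebra.adjoin ℂ (Set.range fun i => rankOneProj (ξ i)))
        (StarAlgebra.adjoin ℂ (Set.range fun j => rankOneProj (ζ j))) :=
  stmt2_general ξ ζ hξ hζ
end

section
/- Let p ≥ 3 be prime and D ∈ ℤ/p a fixed quadratic non-residue. For a₀, a₁ ∈ ℤ/p let C_{a₀,a₁} = span{(1, a₁, 0, a₀), (0, a₀, −1, a₁D)} ⊆ (ℤ/p)⁴ and C_∞ = span{(0,1,0,0), (0,0,0,1)}. Then these p² + 1 two-dimensional subspaces pairwise intersect only in {0}; equivalently, their nonzero vectors partition (ℤ/p)⁴ \ {0}. -/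
/-- The family of `p² + 1` two-dimensional subspaces `C_{a₀,a₁}` and `C_∞` of `(ℤ/p)⁴`. -/
def Cfam (p : ℕ) (D : ZMod p) : Option (ZMod p × ZMod p) → Submodule (ZMod p) (Fin 4 → ZMod p)
  | none => Submodule.span (ZMod p) {![0, 1, 0, 0], ![0, 0, 0, 1]}
  | some (a₀, a₁) => Submodule.span (ZMod p) {![1, a₁, 0, a₀], ![0, a₀, -1, a₁ * D]}

lemma mem_some_iff {p : ℕ} (D a₀ a₁ : ZMod p) (v : Fin 4 → ZMod p) :
    v ∈ Cfam p D (some (a₀, a₁)) ↔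
      v 1 = v 0 * a₁ - v 2 * a₀ ∧ v 3 = v 0 * a₀ - v 2 * (a₁ * D) := by
  simp only [Cfam, Submodule.mem_span_pair]
  constructor
  · rintro ⟨s, t, h⟩
    have h0 := congrFun h 0
    have h1 := congrFun h 1
    have h2 := congrFun h 2
    have h3 := congrFun h 3
    simp [Pi.add_apply, Pi.smul_apply, smul_eq_mul] at h0 h1 h2 h3
    exact ⟨by linear_combination -h1 + a₁ * h0 - a₀ * h2,
           by linear_combination -h3 + a₀ * h0 - a₁ * D * h2⟩
  · rintro ⟨h1, h3⟩
    refine ⟨v 0, -(v 2), ?_⟩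
    funext i
    fin_cases i <;> simp [Pi.add_apply, smul_eq_mul] <;>
      first | linear_combination -h1 | linear_combination -h3

lemma mem_none_iff {p : ℕ} (D : ZMod p) (v : Fin 4 → ZMod p) :
    v ∈ Cfam p D none ↔ v 0 = 0 ∧ v 2 = 0 := by
  simp only [Cfam, Submodule.mem_span_pair]
  constructor
  · rintro ⟨s, t, h⟩
    have h0 := congrFun h 0
    have h2 := congrFun h 2
    simp at h0 h2
    exact ⟨h0.symm, h2.symm⟩
  · rintro ⟨h0, h2⟩
    refine ⟨v 1, v 3, ?_⟩
    funext i
    fin_cases i <;> simp [Pi.add_apply, smul_eq_mul, h0, h2]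

lemma key {p : ℕ} (hp : p.Prime) (D : ZMod p) (hD : ∀ k : ZMod p, D ≠ k ^ 2)
    (x z : ZMod p) (h : x * x - D * (z * z) = 0) : x = 0 ∧ z = 0 := by
  haveI := Fact.mk hp
  by_cases hz : z = 0
  · subst hz
    simp at h
    exact ⟨h, rfl⟩
  · exfalso
    apply hD (x * z⁻¹)
    field_simp
    linear_combination -h

theorem stmt9 {p : ℕ} (hp : p.Prime) (hp3 : 3 ≤ p) (D : ZMod p)
    (hD : ∀ k : ZMod p, D ≠ k ^ 2) :
    (∀ i j : Option (ZMod p × ZMod p), i ≠ j → Cfam p D i ⊓ Cfam p D j = ⊥) ∧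
      ∀ v : Fin 4 → ZMod p, ∃ i, v ∈ Cfam p D i := by
  haveI := Fact.mk hp
  constructor
  · -- pairwise trivial intersection
    have zero_of : ∀ (a₀ a₁ : ZMod p) (v : Fin 4 → ZMod p),
        v ∈ Cfam p D (some (a₀, a₁)) → v 0 = 0 → v 2 = 0 → v = 0 := by
      intro a₀ a₁ v hv h0 h2
      rw [mem_some_iff] at hv
      funext i
      fin_cases i <;> simp [h0, h2, hv.1, hv.2]
    have sn : ∀ (a₀ a₁ : ZMod p), Cfam p D (some (a₀, a₁)) ⊓ Cfam p D none = ⊥ := by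
      intro a₀ a₁
      rw [eq_bot_iff]
      intro v hv
      rw [Submodule.mem_inf] at hv
      obtain ⟨hv1, hv2⟩ := hv
      rw [mem_none_iff] at hv2
      exact zero_of a₀ a₁ v hv1 hv2.1 hv2.2
    intro i j hij
    match i, j with
    | none, none => exact absurd rfl hij
    | none, some (a₀, a₁) => rw [inf_comm]; exact sn a₀ a₁
    | some (a₀, a₁), none => exact sn a₀ a₁
    | some (a₀, a₁), some (b₀, b₁) =>
      rw [eq_bot_iff]
      intro v hv
      rw [Submodule.mem_inf] at hv
      obtain ⟨hva, hvb⟩ := hv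
      rw [mem_some_iff] at hva hvb
      obtain ⟨ha1, ha3⟩ := hva
      obtain ⟨hb1, hb3⟩ := hvb
      -- v0 (a₁-b₁) = v2 (a₀-b₀),  v0 (a₀-b₀) = v2 D (a₁-b₁)
      have e1 : v 0 * (a₁ - b₁) = v 2 * (a₀ - b₀) := by linear_combination hb1 - ha1
      have e2 : v 0 * (a₀ - b₀) = v 2 * D * (a₁ - b₁) := by linear_combination hb3 - ha3
      have hd : v 0 = 0 ∧ v 2 = 0 := by
        by_cases hd0 : v 0 * v 0 - D * (v 2 * v 2) = 0
        · exact key hp D hD _ _ hd0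
        · exfalso
          have hy : a₁ - b₁ = 0 := by
            have : (v 0 * v 0 - D * (v 2 * v 2)) * (a₁ - b₁) = 0 := by
              linear_combination v 0 * e1 + v 2 * e2
            exact (mul_eq_zero.1 this).resolve_left hd0
          have hx : a₀ - b₀ = 0 := by
            have : (v 0 * v 0 - D * (v 2 * v 2)) * (a₀ - b₀) = 0 := by
              linear_combination v 0 * e2 + v 2 * D * e1
            exact (mul_eq_zero.1 this).resolve_left hd0
          apply hij
          have : a₀ = b₀ := by linear_combination hx
          have : a₁ = b₁ := by linear_combination hy
          simp_all
      exact (Submodule.mem_bot _).2 (zero_of a₀ a₁ v ((mem_some_iff D a₀ a₁ v).2 ⟨ha1, ha3⟩) hd.1 hd.2)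
  · -- covering
    intro v
    by_cases h02 : v 0 = 0 ∧ v 2 = 0
    · exact ⟨none, (mem_none_iff D v).2 h02⟩
    · have hd : v 0 * v 0 - D * (v 2 * v 2) ≠ 0 := fun h => h02 (key hp D hD _ _ h)
      set d := v 0 * v 0 - D * (v 2 * v 2) with hdd
      refine ⟨some ((v 2 * D * v 1 + v 0 * v 3) / d, (v 2 * v 3 + v 0 * v 1) / d),
        (mem_some_iff D _ _ v).2 ⟨?_, ?_⟩⟩ <;> field_simp <;> ring
end

section
/- Let p ≥ 3 be prime and D ∈ ℤ/p a quadratic non-residue. For a ∈ ℤ/p define D_a = span{(1,1,−a,aD), (1,2,−a,2aD)} and D_∞ = span{(0,0,1,0),(0,0,0,1)} in (ℤ/p)⁴. Then any two of these p + 1 subspaces intersect only in {0}, and ⋃_{a∈ℤ/p} D_a ∪ D_∞ = ⋃_{a₁∈ℤ/p} C_{0,a₁} ∪ C_∞, where C_{0,a₁} = span{(1, a₁, 0, 0), (0, 0, −1, a₁D)} and C_∞ = span{(0,1,0,0),(0,0,0,1)}. -/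
/-- The subspaces `D_a` (for `a ∈ ℤ/p`) and `D_∞` of `(ℤ/p)⁴`. -/
def Dfam (p : ℕ) (D : ZMod p) : Option (ZMod p) → Submodule (ZMod p) (Fin 4 → ZMod p)
  | none => Submodule.span (ZMod p) {![0, 0, 1, 0], ![0, 0, 0, 1]}
  | some a => Submodule.span (ZMod p) {![1, 1, -a, a * D], ![1, 2, -a, 2 * a * D]}

/-- The subspaces `C_{0,a₁}` (for `a₁ ∈ ℤ/p`) and `C_∞` of `(ℤ/p)⁴`. -/
def Cfam0 (p : ℕ) (D : ZMod p) : Option (ZMod p) → Submodule (ZMod p) (Fin 4 → ZMod p)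
  | none => Submodule.span (ZMod p) {![0, 1, 0, 0], ![0, 0, 0, 1]}
  | some a₁ => Submodule.span (ZMod p) {![1, a₁, 0, 0], ![0, 0, -1, a₁ * D]}

/-!
Each of the planes is cut out by two linear equations in the coordinates `x₀, x₁, x₂, x₃`.
From these, two distinct planes `D_a, D_b` meet only in `0` because `(a - b) x₀ = 0` and
`(a - b) D x₁ = 0`. Both families are rulings of the hyperbolic quadric
`x₀ x₃ + D x₁ x₂ = 0`: every plane of either family lies on it, and conversely a zero of the
quadric lies on the plane with parameter `-x₂ / x₀` (resp. `x₁ / x₀`) when `x₀ ≠ 0`, while for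
`x₀ = 0` the equation `D x₁ x₂ = 0` with `D ≠ 0` forces `x₁ = 0` or `x₂ = 0`.
So both unions equal the zero set of the quadric.
-/

section Coordinates

variable {p : ℕ} (D : ZMod p) (x : Fin 4 → ZMod p)

lemma mem_Dfam_none : x ∈ Dfam p D none ↔ x 0 = 0 ∧ x 1 = 0 := by
  simp only [Dfam, Submodule.mem_span_pair]
  constructor
  · rintro ⟨m, n, rfl⟩
    simp
  · rintro ⟨h0, h1⟩
    refine ⟨x 2, x 3, ?_⟩
    ext i
    fin_cases i <;> simp [h0, h1]

lemma mem_Dfam_some (a : ZMod p) :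
    x ∈ Dfam p D (some a) ↔ x 2 = -(a * x 0) ∧ x 3 = a * D * x 1 := by
  simp only [Dfam, Submodule.mem_span_pair]
  constructor
  · rintro ⟨m, n, rfl⟩
    constructor <;> simp <;> ring
  · rintro ⟨h2, h3⟩
    refine ⟨2 * x 0 - x 1, x 1 - x 0, ?_⟩
    ext i
    fin_cases i <;> simp [h2, h3] <;> ring

lemma mem_Cfam0_none : x ∈ Cfam0 p D none ↔ x 0 = 0 ∧ x 2 = 0 := by
  simp only [Cfam0, Submodule.mem_span_pair]
  constructor
  · rintro ⟨m, n, rfl⟩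
    simp
  · rintro ⟨h0, h2⟩
    refine ⟨x 1, x 3, ?_⟩
    ext i
    fin_cases i <;> simp [h0, h2]

lemma mem_Cfam0_some (a : ZMod p) :
    x ∈ Cfam0 p D (some a) ↔ x 1 = a * x 0 ∧ x 3 = -(a * D * x 2) := by
  simp only [Cfam0, Submodule.mem_span_pair]
  constructor
  · rintro ⟨m, n, rfl⟩
    constructor <;> simp <;> ring
  · rintro ⟨h1, h3⟩
    refine ⟨x 0, -x 2, ?_⟩
    ext i
    fin_cases i <;> simp [h1, h3] <;> ring

end Coordinates

lemma Dfam_none_inf_some {p : ℕ} (D a : ZMod p) : Dfam p D none ⊓ Dfam p D (some a) = ⊥ := by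
  refine (Submodule.eq_bot_iff _).2 fun x hx => ?_
  rw [Submodule.mem_inf, mem_Dfam_none, mem_Dfam_some] at hx
  obtain ⟨⟨h0, h1⟩, h2, h3⟩ := hx
  ext i
  fin_cases i <;> simp [h0, h1, h2, h3]

section Field

variable {p : ℕ} [Fact p.Prime] {D : ZMod p}

lemma Dfam_some_inf_some (hD : D ≠ 0) {a b : ZMod p} (hab : a ≠ b) :
    Dfam p D (some a) ⊓ Dfam p D (some b) = ⊥ := by
  refine (Submodule.eq_bot_iff _).2 fun x hx => ?_
  rw [Submodule.mem_inf, mem_Dfam_some, mem_Dfam_some] at hx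
  obtain ⟨⟨h2, h3⟩, h2', h3'⟩ := hx
  have hab' : a - b ≠ 0 := sub_ne_zero.2 hab
  have h0 : x 0 = 0 := by
    have : (a - b) * x 0 = 0 := by linear_combination h2 - h2'
    simpa [hab'] using this
  have h1 : x 1 = 0 := by
    have : (a - b) * D * x 1 = 0 := by linear_combination h3' - h3
    simpa [hab', hD] using this
  ext i
  fin_cases i <;> simp [h0, h1, h2, h3]

lemma Dfam_inf_Dfam_eq_bot (hD : D ≠ 0) {i j : Option (ZMod p)} (hij : i ≠ j) :
    Dfam p D i ⊓ Dfam p D j = ⊥ := by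
  rcases i with _ | a <;> rcases j with _ | b
  · exact absurd rfl hij
  · exact Dfam_none_inf_some D b
  · rw [inf_comm]
    exact Dfam_none_inf_some D a
  · exact Dfam_some_inf_some hD (Option.some_injective _ |>.ne_iff.1 hij)

lemma exists_mem_Dfam_iff (hD : D ≠ 0) (x : Fin 4 → ZMod p) :
    (∃ i, x ∈ Dfam p D i) ↔ x 0 * x 3 + D * x 1 * x 2 = 0 := by
  constructor
  · rintro ⟨_ | a, hx⟩
    · obtain ⟨h0, h1⟩ := (mem_Dfam_none D x).1 hx
      simp [h0, h1]
    · obtain ⟨h2, h3⟩ := (mem_Dfam_some D x a).1 hx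
      rw [h2, h3]
      ring
  · intro hQ
    by_cases h0 : x 0 = 0
    · by_cases h1 : x 1 = 0
      · exact ⟨none, (mem_Dfam_none D x).2 ⟨h0, h1⟩⟩
      · have h2 : x 2 = 0 := by simpa [h0, hD, h1] using hQ
        refine ⟨some (x 3 / (D * x 1)), (mem_Dfam_some D x _).2 ⟨by simp [h0, h2], ?_⟩⟩
        field_simp
    · refine ⟨some (-x 2 / x 0), (mem_Dfam_some D x _).2 ⟨by field_simp, ?_⟩⟩
      field_simp
      linear_combination hQ

lemma exists_mem_Cfam0_iff (hD : D ≠ 0) (x : Fin 4 → ZMod p) :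
    (∃ i, x ∈ Cfam0 p D i) ↔ x 0 * x 3 + D * x 1 * x 2 = 0 := by
  constructor
  · rintro ⟨_ | a, hx⟩
    · obtain ⟨h0, h2⟩ := (mem_Cfam0_none D x).1 hx
      simp [h0, h2]
    · obtain ⟨h1, h3⟩ := (mem_Cfam0_some D x a).1 hx
      rw [h1, h3]
      ring
  · intro hQ
    by_cases h0 : x 0 = 0
    · by_cases h2 : x 2 = 0
      · exact ⟨none, (mem_Cfam0_none D x).2 ⟨h0, h2⟩⟩
      · have h1 : x 1 = 0 := by simpa [h0, hD, h2] using hQ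
        refine ⟨some (-x 3 / (D * x 2)), (mem_Cfam0_some D x _).2 ⟨by simp [h0, h1], ?_⟩⟩
        field_simp
    · refine ⟨some (x 1 / x 0), (mem_Cfam0_some D x _).2 ⟨by field_simp, ?_⟩⟩
      field_simp
      linear_combination hQ

end Field

theorem stmt11_general {p : ℕ} (hp : p.Prime) (D : ZMod p)
    (hD : ∀ k : ZMod p, D ≠ k ^ 2) :
    (∀ i j : Option (ZMod p), i ≠ j → Dfam p D i ⊓ Dfam p D j = ⊥) ∧
      (⋃ i : Option (ZMod p), (Dfam p D i : Set (Fin 4 → ZMod p))) =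
        ⋃ i : Option (ZMod p), (Cfam0 p D i : Set (Fin 4 → ZMod p)) := by
  have := Fact.mk hp
  have hD0 : D ≠ 0 := by simpa using hD 0
  refine ⟨fun i j => Dfam_inf_Dfam_eq_bot hD0, ?_⟩
  ext x
  simp only [Set.mem_iUnion, SetLike.mem_coe, exists_mem_Dfam_iff hD0, exists_mem_Cfam0_iff hD0]

theorem stmt11 {p : ℕ} (hp : p.Prime) (hp3 : 3 ≤ p) (D : ZMod p)
    (hD : ∀ k : ZMod p, D ≠ k ^ 2) :
    (∀ i j : Option (ZMod p), i ≠ j → Dfam p D i ⊓ Dfam p D j = ⊥) ∧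
      (⋃ i : Option (ZMod p), (Dfam p D i : Set (Fin 4 → ZMod p))) =
        ⋃ i : Option (ZMod p), (Cfam0 p D i : Set (Fin 4 → ZMod p)) :=
  stmt11_general hp D hD
end

section
/- Let p be prime, k ≥ 1, and GF(p^k) the field with p^k elements. On GF(p^k)⁴ define a∘b = a⁽¹⁾b⁽²⁾ − a⁽²⁾b⁽¹⁾ + a⁽³⁾b⁽⁴⁾ − a⁽⁴⁾b⁽³⁾. There exist a ℤ/p-linear functional φ : GF(p^k) → ℤ/p and a ℤ/p-linear isomorphism π₁ : GF(p^k)⁴ → (ℤ/p)^{4k} such that φ(a∘b) = π₁(a)∘π₁(b) for all a, b, where the symplectic form on (ℤ/p)^{4k} = ((ℤ/p)^k)⁴ is u∘v = Σᵢ (uᵢ⁽¹⁾vᵢ⁽²⁾ − uᵢ⁽²⁾vᵢ⁽¹⁾ + uᵢ⁽³⁾vᵢ⁽⁴⁾ − uᵢ⁽⁴⁾vᵢ⁽³⁾). -/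
open Finset

/-- The symplectic product on `GF(p^k)⁴`. -/
noncomputable def symplGF {p k : ℕ} [Fact p.Prime] (a b : Fin 4 → GaloisField p k) : GaloisField p k :=
  a 0 * b 1 - a 1 * b 0 + a 2 * b 3 - a 3 * b 2

/-- The symplectic product on `(ℤ/p)^{4k} = ((ℤ/p)^k)⁴`. -/
def symplZ {p k : ℕ} (u v : Fin 4 → Fin k → ZMod p) : ZMod p :=
  ∑ i : Fin k,
    (u 0 i * v 1 i - u 1 i * v 0 i + u 2 i * v 3 i - u 3 i * v 2 i)

/-!
The trace form `(x, y) ↦ Tr(x y)` of `GF(p^k)` over `ℤ/p` is nondegenerate, so a basis `e` of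
`GF(p^k)` has a dual basis `f` with `Tr(x y) = ∑ᵢ eᵢ(x) fᵢ(y)`. Taking coordinates with respect to
`e` in the first and third slots and with respect to `f` in the second and fourth turns
`Tr(a ∘ b)` into the standard symplectic form on `((ℤ/p)^k)⁴`.
-/

open LinearMap (BilinForm)

namespace LinearMap.BilinForm

variable {K V ι : Type*} [Field K] [AddCommGroup V] [Module K V] [Fintype ι] [DecidableEq ι]

theorem apply_eq_sum_repr_mul_dualBasis_flip_repr {B : BilinForm K V} (hB : B.Nondegenerate)
    (b : Module.Basis ι K V) (x y : V) :
    B x y = ∑ i, b.repr x i * (B.flip.dualBasis hB.flip b).repr y i := by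
  simp only [dualBasis_repr_apply, flip_apply]
  conv_lhs => rw [← b.sum_repr x]
  simp only [map_sum, map_smul, LinearMap.sum_apply, LinearMap.smul_apply, smul_eq_mul]

end LinearMap.BilinForm

theorem stmt17 {p k : ℕ} [Fact p.Prime] (hk : 1 ≤ k) :
    ∃ (φ : GaloisField p k →ₗ[ZMod p] ZMod p)
      (π₁ : (Fin 4 → GaloisField p k) ≃ₗ[ZMod p] (Fin 4 → Fin k → ZMod p)),
      ∀ a b : Fin 4 → GaloisField p k,
        φ (symplGF a b) = symplZ (π₁ a) (π₁ b) := by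
  let e := Module.finBasisOfFinrankEq (ZMod p) (GaloisField p k) (GaloisField.finrank p (by omega))
  have hB := traceForm_nondegenerate (ZMod p) (GaloisField p k)
  let f := (Algebra.traceForm (ZMod p) (GaloisField p k)).flip.dualBasis hB.flip e
  have htrace (x y : GaloisField p k) :
      Algebra.trace (ZMod p) _ (x * y) = ∑ i, e.equivFun x i * f.equivFun y i :=
    (Algebra.traceForm_apply _ x y).symm.trans
      (BilinForm.apply_eq_sum_repr_mul_dualBasis_flip_repr hB e x y)
  refine ⟨Algebra.trace (ZMod p) _,
    LinearEquiv.piCongrRight ![e.equivFun, f.equivFun, e.equivFun, f.equivFun], fun a b => ?_⟩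
  rw [symplGF, map_sub, map_add, map_sub, mul_comm (a 1), mul_comm (a 3), htrace, htrace, htrace,
    htrace, symplZ, ← sum_sub_distrib, ← sum_add_distrib, ← sum_sub_distrib]
  refine sum_congr rfl fun i _ => ?_
  simp only [LinearEquiv.piCongrRight_apply, Matrix.cons_val_zero, Matrix.cons_val_one,
    Matrix.cons_val]
  ring
end

section
/- Let p be prime, k ≥ 1, and D ∈ GF(p^k) a nonzero element that is not a square. For a, b ∈ GF(p^k) define C_{a,b} = {x(1, b, 0, a) + y(0, a, −1, bD) : x, y ∈ GF(p^k)} ⊆ GF(p^k)⁴ and C_∞ = {x(0,1,0,0) + y(0,0,0,1) : x, y ∈ GF(p^k)}. Then any two of these p^{2k} + 1 subspaces intersect only in {0}, and their nonzero vectors partition GF(p^k)⁴ \ {0}. -/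
/-- The family of `p^{2k} + 1` subspaces `C_{a,b}` and `C_∞` of `GF(p^k)⁴`. -/
noncomputable def CfamGF (p k : ℕ) [Fact p.Prime] (D : GaloisField p k) :
    Option (GaloisField p k × GaloisField p k) →
      Submodule (GaloisField p k) (Fin 4 → GaloisField p k)
  | none => Submodule.span (GaloisField p k) {![0, 1, 0, 0], ![0, 0, 0, 1]}
  | some (a, b) => Submodule.span (GaloisField p k) {![1, b, 0, a], ![0, a, -1, b * D]}

private lemma keyNS {F : Type*} [Field F] {D : F} (hD : ∀ c : F, D ≠ c ^ 2)
    {u w : F} (h : u * u = w * w * D) : u = 0 ∧ w = 0 := by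
  by_cases hw : w = 0
  · subst hw
    simp only [zero_mul, mul_eq_zero] at h
    refine ⟨?_, rfl⟩
    rcases h with h | h <;> exact h
  · exfalso
    apply hD (u / w)
    field_simp
    linear_combination -h

private lemma mem_someGF {p k : ℕ} [Fact p.Prime] {D a b : GaloisField p k}
    {v : Fin 4 → GaloisField p k} :
    v ∈ CfamGF p k D (some (a, b)) ↔
      v 1 = v 0 * b - v 2 * a ∧ v 3 = v 0 * a - v 2 * (b * D) := by
  show v ∈ Submodule.span _ _ ↔ _
  rw [Submodule.mem_span_pair]
  constructor
  · rintro ⟨x, y, rfl⟩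
    constructor <;> simp <;> ring
  · rintro ⟨h1, h3⟩
    refine ⟨v 0, -(v 2), ?_⟩
    funext i
    fin_cases i <;> simp [h1, h3] <;> ring

private lemma mem_noneGF {p k : ℕ} [Fact p.Prime] {D : GaloisField p k}
    {v : Fin 4 → GaloisField p k} :
    v ∈ CfamGF p k D none ↔ v 0 = 0 ∧ v 2 = 0 := by
  show v ∈ Submodule.span _ _ ↔ _
  rw [Submodule.mem_span_pair]
  constructor
  · rintro ⟨x, y, rfl⟩
    constructor <;> simp
  · rintro ⟨h0, h2⟩
    refine ⟨v 1, v 3, ?_⟩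
    funext i
    fin_cases i <;> simp [h0, h2]

theorem stmt18 {p k : ℕ} [Fact p.Prime] (hk : 1 ≤ k) (D : GaloisField p k)
    (hD0 : D ≠ 0) (hD : ∀ c : GaloisField p k, D ≠ c ^ 2) :
    (∀ i j, i ≠ j → CfamGF p k D i ⊓ CfamGF p k D j = ⊥) ∧
      ∀ v : Fin 4 → GaloisField p k, ∃ i, v ∈ CfamGF p k D i := by
  constructor
  · intro i j hij
    rw [eq_bot_iff]
    intro v hv
    rw [Submodule.mem_inf] at hv
    obtain ⟨hvi, hvj⟩ := hv
    rw [Submodule.mem_bot]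
    match i, j with
    | none, none => exact absurd rfl hij
    | none, some (a, b) =>
      obtain ⟨h0, h2⟩ := mem_noneGF.mp hvi
      obtain ⟨h1, h3⟩ := mem_someGF.mp hvj
      have hv1 : v 1 = 0 := by rw [h1, h0, h2]; ring
      have hv3 : v 3 = 0 := by rw [h3, h0, h2]; ring
      funext t
      fin_cases t
      · exact h0
      · exact hv1
      · exact h2
      · exact hv3
    | some (a, b), none =>
      obtain ⟨h0, h2⟩ := mem_noneGF.mp hvj
      obtain ⟨h1, h3⟩ := mem_someGF.mp hvi
      have hv1 : v 1 = 0 := by rw [h1, h0, h2]; ring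
      have hv3 : v 3 = 0 := by rw [h3, h0, h2]; ring
      funext t
      fin_cases t
      · exact h0
      · exact hv1
      · exact h2
      · exact hv3
    | some (a, b), some (a', b') =>
      obtain ⟨h1, h3⟩ := mem_someGF.mp hvi
      obtain ⟨h1', h3'⟩ := mem_someGF.mp hvj
      set α := a - a' with hα
      set β := b - b' with hβ
      have e1 : v 0 * β - v 2 * α = 0 := by
        rw [hα, hβ]; linear_combination h1' - h1
      have e2 : v 0 * α - v 2 * (D * β) = 0 := by
        rw [hα, hβ]; linear_combination h3' - h3
      have hne : ¬(α = 0 ∧ β = 0) := by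
        rintro ⟨hA, hB⟩
        apply hij
        have ha : a = a' := by rw [← sub_eq_zero]; exact hA
        have hb : b = b' := by rw [← sub_eq_zero]; exact hB
        rw [ha, hb]
      have hdet : α * α - β * β * D ≠ 0 := by
        intro hz
        have : α * α = β * β * D := by linear_combination hz
        exact hne (keyNS hD this)
      have h2 : v 2 = 0 := by
        have hv2 : v 2 * (α * α - β * β * D) = 0 := by
          linear_combination β * e2 - α * e1
        rcases mul_eq_zero.mp hv2 with h | h
        · exact h
        · exact absurd h hdet
      have h0 : v 0 = 0 := by
        by_contra h0
        apply hne
        have hA : α = 0 := by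
          have := e2
          rw [h2] at this
          simp only [zero_mul, mul_zero, sub_zero, mul_eq_zero] at this
          tauto
        have hB : β = 0 := by
          have := e1
          rw [h2] at this
          simp only [zero_mul, mul_zero, sub_zero, mul_eq_zero] at this
          tauto
        exact ⟨hA, hB⟩
      have hv1 : v 1 = 0 := by rw [h1, h0, h2]; ring
      have hv3 : v 3 = 0 := by rw [h3, h0, h2]; ring
      funext t
      fin_cases t
      · exact h0
      · exact hv1
      · exact h2
      · exact hv3
  · intro v
    by_cases h0 : v 0 = 0 ∧ v 2 = 0
    · exact ⟨none, mem_noneGF.mpr h0⟩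
    · set d := v 2 * v 2 * D - v 0 * v 0 with hd
      have hdne : d ≠ 0 := by
        intro hz
        apply h0
        have : v 0 * v 0 = v 2 * v 2 * D := by rw [hd] at hz; linear_combination -hz
        exact keyNS hD this
      refine ⟨some ((-(v 1) * v 2 * D - v 0 * v 3) / d, (-(v 2) * v 3 - v 0 * v 1) / d),
        mem_someGF.mpr ⟨?_, ?_⟩⟩
      · field_simp
        rw [hd]; ring
      · field_simp
        rw [hd]; ring
end
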